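/- arXiv:2501.04191 — 2 statements merged into one kernel-verified Lean document; each statement's English description precedes it below -/
import Mathlib

section
/- Let λ, μ be incomparable (in dominance order) partitions of length 3 with the same size n, with λ₁ > μ₁ and λ₃ = μ₃ + 1, such that the convex hull P of all permutations of λ and μ has {λ, μ} as its set of dominance-maximal partition lattice points. Then for every t ∈ ℤ_{>0}, the polynomial ts = Σ_{i=0}^{t} s_{(t−i)λ + iμ} (Schur polynomials in 3 variables) has saturated Newton polytope, and Newt(ts) = tP. -/
/-!
For a partition `ν` with three parts, the support of `s_ν` consists of the lattice points with
coordinate sum `|ν|` and all coordinates between `ν₃` and `ν₁`; its convex hull is the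
permutohedron of `ν` (Rado's theorem, here by two transfers between coordinates). Since
`(t - i)λ + iμ` interpolates linearly between `tλ` and `tμ`, the polytope `tP` is the union of
the corresponding boxes for the real interpolants `(t - r)λ + rμ`, `r ∈ [0, t]`. A lattice point
of the box at `r` lies in the box of `ν = (t - ⌊r⌋)λ + ⌊r⌋μ`: the upper bound `tλ₁ - r(λ₁ - μ₁)`
only grows as `r` decreases, and the lower bound `tλ₃ - r` has slope exactly `1` because
`λ₃ = μ₃ + 1`, so for integer coordinates it survives rounding `r` down.
-/

open Pointwise

/-- The content of a semistandard Young tableau. -/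
def content {μ : YoungDiagram} (T : SemistandardYoungTableau μ) (v : ℕ) : ℕ :=
  (μ.cells.filter fun c => T c.1 c.2 = v).card

/-- Content vectors of semistandard Young tableaux of shape `D` with entries in `{0,1,2}`:
the support of the Schur polynomial `s_D` in 3 variables. -/
def ssytContents (D : YoungDiagram) : Set (Fin 3 → ℕ) :=
  {α | ∃ T : SemistandardYoungTableau D,
    (∀ c ∈ D.cells, T c.1 c.2 < 3) ∧ ∀ i : Fin 3, content T (i : ℕ) = α i}

/-- `D` is the Young diagram of the length-3 partition `ν`. -/
def HasShape (D : YoungDiagram) (ν : Fin 3 → ℕ) : Prop :=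
  ∀ r : ℕ, D.rowLen r = if h : r < 3 then ν ⟨r, h⟩ else 0

/-- Cast a vector of naturals to a real vector. -/
def castN (α : Fin 3 → ℕ) : Fin 3 → ℝ := fun i => (α i : ℝ)

/-- The set of all coordinate permutations of `v`. -/
def perms (v : Fin 3 → ℝ) : Set (Fin 3 → ℝ) :=
  {w | ∃ π : Equiv.Perm (Fin 3), w = v ∘ π}

/-- `p` is a partition of length 3 (weakly decreasing). -/
def IsPartition3 (p : Fin 3 → ℕ) : Prop := p 0 ≥ p 1 ∧ p 1 ≥ p 2

/-- Dominance order: `Dom p q` means `p ⊴ q`. -/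
def Dom (p q : Fin 3 → ℕ) : Prop :=
  p 0 ≤ q 0 ∧ p 0 + p 1 ≤ q 0 + q 1

/-- `p` is a dominance-maximal partition lattice point of `P`. -/
def IsMaxPLP (P : Set (Fin 3 → ℝ)) (p : Fin 3 → ℕ) : Prop :=
  (IsPartition3 p ∧ castN p ∈ P) ∧
    ∀ q : Fin 3 → ℕ, (IsPartition3 q ∧ castN q ∈ P) → Dom p q → q = p

/-- The support of `ts = Σ_{i=0}^t s_{(t-i)λ + iμ}`. -/
def suppTS (l m : Fin 3 → ℕ) (t : ℕ) : Set (Fin 3 → ℕ) :=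
  {α | ∃ i ≤ t, ∃ D : YoungDiagram,
    HasShape D (fun j => (t - i) * l j + i * m j) ∧ α ∈ ssytContents D}

-- For weakly decreasing `v`, the vectors whose decreasing rearrangement is dominated by `v`:
-- with three coordinates, dominance amounts to these bounds.
def majorizedSet {R : Type*} [AddCommMonoid R] [LE R] (v : Fin 3 → R) : Set (Fin 3 → R) :=
  {x | ∑ j, x j = ∑ j, v j ∧ ∀ j, v 2 ≤ x j ∧ x j ≤ v 0}

lemma comp_perm_mem_majorizedSet {R : Type*} [AddCommMonoid R] [PartialOrder R]
    {v : Fin 3 → R} (hv : Antitone v) (π : Equiv.Perm (Fin 3)) : v ∘ π ∈ majorizedSet v :=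
  ⟨Equiv.sum_comp π v, fun j => ⟨hv (Fin.le_last (π j)), hv (Fin.zero_le (π j))⟩⟩

lemma smul_add_smul_mem_majorizedSet {v w x y : Fin 3 → ℝ} (hx : x ∈ majorizedSet v)
    (hy : y ∈ majorizedSet w) {a b : ℝ} (ha : 0 ≤ a) (hb : 0 ≤ b) :
    a • x + b • y ∈ majorizedSet (a • v + b • w) := by
  refine ⟨?_, fun j => ?_⟩
  · simp only [Pi.add_apply, Pi.smul_apply, smul_eq_mul, Finset.sum_add_distrib,
      ← Finset.mul_sum, hx.1, hy.1]
  · have := hx.2 j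
    have := hy.2 j
    simp only [Pi.add_apply, Pi.smul_apply, smul_eq_mul]
    constructor <;> gcongr <;> tauto

lemma castN_mem_majorizedSet_iff {α ν : Fin 3 → ℕ} :
    castN α ∈ majorizedSet (castN ν) ↔ α ∈ majorizedSet ν := by
  simp only [majorizedSet, castN, Set.mem_ofPred_eq]
  norm_cast

section Permutohedron

variable {v x : Fin 3 → ℝ}

lemma comp_mem_convexHull_perms (σ : Equiv.Perm (Fin 3)) (hx : x ∈ convexHull ℝ (perms v)) :
    x ∘ σ ∈ convexHull ℝ (perms v) := by
  let f : (Fin 3 → ℝ) →ₗ[ℝ] (Fin 3 → ℝ) := LinearMap.funLeft ℝ ℝ σ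
  have hf : f '' perms v ⊆ perms v := by
    rintro _ ⟨_, ⟨π, rfl⟩, rfl⟩
    exact ⟨σ.trans π, rfl⟩
  exact convexHull_mono hf (f.image_convexHull (perms v) ▸ ⟨x, hx, rfl⟩)

lemma vec_swap_mem_convexHull_perms {a b c : ℝ} (h : ![a, b, c] ∈ convexHull ℝ (perms v)) :
    ![b, a, c] ∈ convexHull ℝ (perms v) := by
  convert comp_mem_convexHull_perms (Equiv.swap 0 1) h using 1
  ext i; fin_cases i <;> rfl

lemma vec_rotate_mem_convexHull_perms {a b c : ℝ} (h : ![a, b, c] ∈ convexHull ℝ (perms v)) :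
    ![b, c, a] ∈ convexHull ℝ (perms v) := by
  convert comp_mem_convexHull_perms (finRotate 3) h using 1
  ext i; fin_cases i <;> rfl

lemma vec_mix_mem_convexHull_perms {a b c d : ℝ} (h : ![a, b, c] ∈ convexHull ℝ (perms v))
    (hd : d ∈ Set.uIcc a b) : ![d, a + b - d, c] ∈ convexHull ℝ (perms v) := by
  rw [← segment_eq_uIcc] at hd
  obtain ⟨p, q, hp, hq, hpq, rfl⟩ := hd
  convert convex_convexHull ℝ _ h (vec_swap_mem_convexHull_perms h) hp hq hpq using 1
  ext i; fin_cases i <;> simp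
  · linear_combination -(a + b) * hpq
  · linear_combination -c * hpq

lemma vec_mem_convexHull_perms (hv : Antitone v) {a b c : ℝ} (hab : a ≤ b) (hbc : b ≤ c)
    (ha : v 2 ≤ a) (hc : c ≤ v 0) (hsum : a + b + c = v 0 + v 1 + v 2) :
    ![a, b, c] ∈ convexHull ℝ (perms v) := by
  -- one transfer between two coordinates of a permutation of `v` puts `c` in the last
  -- coordinate, a second one between the first two coordinates then produces `a` and `b`
  have hv₀₁ : v 1 ≤ v 0 := hv (by decide)
  have hv₁₂ : v 2 ≤ v 1 := hv (by decide)
  have hv' : ![v 0, v 1, v 2] ∈ convexHull ℝ (perms v) :=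
    subset_convexHull ℝ _ ⟨1, by ext i; fin_cases i <;> rfl⟩
  rcases le_total (v 1) c with hc₁ | hc₁
  · have hy : ![v 2, v 0 + v 1 - c, c] ∈ convexHull ℝ (perms v) := by
      have := vec_mix_mem_convexHull_perms (vec_swap_mem_convexHull_perms hv')
        (d := v 0 + v 1 - c) (Set.mem_uIcc.2 (Or.inl ⟨by linarith, by linarith⟩))
      rw [show v 1 + v 0 - (v 0 + v 1 - c) = c by ring] at this
      exact vec_rotate_mem_convexHull_perms (vec_rotate_mem_convexHull_perms this)
    convert vec_mix_mem_convexHull_perms hy (d := a)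
      (Set.mem_uIcc.2 (Or.inl ⟨ha, by linarith⟩)) using 3
    linarith
  · have hy : ![v 0 + v 2 - c, v 1, c] ∈ convexHull ℝ (perms v) := by
      have := vec_mix_mem_convexHull_perms
        (vec_rotate_mem_convexHull_perms (vec_rotate_mem_convexHull_perms hv'))
        (d := c) (Set.mem_uIcc.2 (Or.inl ⟨by linarith, hc⟩))
      rw [show v 2 + v 0 - c = v 0 + v 2 - c by ring] at this
      exact vec_rotate_mem_convexHull_perms this
    convert vec_mix_mem_convexHull_perms hy (d := a)
      (Set.mem_uIcc.2 (Or.inl ⟨by linarith, by linarith⟩)) using 3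
    linarith

theorem majorizedSet_subset_convexHull_perms (hv : Antitone v) :
    majorizedSet v ⊆ convexHull ℝ (perms v) := by
  rintro x ⟨hsum, hx⟩
  have hmono := Tuple.monotone_sort x
  set σ := Tuple.sort x
  have hsum' : x (σ 0) + x (σ 1) + x (σ 2) = v 0 + v 1 + v 2 := by
    simpa only [Fin.sum_univ_three] using (Equiv.sum_comp σ x).trans hsum
  have hsorted : x ∘ σ ∈ convexHull ℝ (perms v) := by
    convert vec_mem_convexHull_perms hv (hmono (by decide : (0 : Fin 3) ≤ 1))
      (hmono (by decide : (1 : Fin 3) ≤ 2)) (hx _).1 (hx _).2 hsum' using 1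
    ext i; fin_cases i <;> rfl
  simpa [Function.comp_assoc] using comp_mem_convexHull_perms σ.symm hsorted

lemma smul_perms (c : ℝ) (v : Fin 3 → ℝ) : c • perms v = perms (c • v) := by
  ext w
  simp only [Set.mem_smul_set, perms, Set.mem_ofPred_eq]
  constructor
  · rintro ⟨_, ⟨π, rfl⟩, rfl⟩
    exact ⟨π, rfl⟩
  · rintro ⟨π, rfl⟩
    exact ⟨v ∘ π, ⟨π, rfl⟩, rfl⟩

lemma convex_biUnion_majorizedSet (u w : Fin 3 → ℝ) :
    Convex ℝ (⋃ s ∈ Set.Icc (0 : ℝ) 1, majorizedSet ((1 - s) • u + s • w)) := by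
  intro x hx y hy a b ha hb hab
  simp only [Set.mem_iUnion, exists_prop] at hx hy ⊢
  obtain ⟨s, hs, hx⟩ := hx
  obtain ⟨s', hs', hy⟩ := hy
  refine ⟨a * s + b * s', ⟨by nlinarith [hs.1, hs'.1], by nlinarith [hs.2, hs'.2]⟩, ?_⟩
  convert smul_add_smul_mem_majorizedSet hx hy ha hb using 2
  ext j
  simp only [Pi.add_apply, Pi.smul_apply, smul_eq_mul]
  linear_combination -(u j) * hab

theorem convexHull_perms_union {u w : Fin 3 → ℝ} (hu : Antitone u) (hw : Antitone w) :
    convexHull ℝ (perms u ∪ perms w) =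
      ⋃ s ∈ Set.Icc (0 : ℝ) 1, majorizedSet ((1 - s) • u + s • w) := by
  apply subset_antisymm
  · refine convexHull_min ?_ (convex_biUnion_majorizedSet u w)
    rintro _ (⟨π, rfl⟩ | ⟨π, rfl⟩) <;> simp only [Set.mem_iUnion, exists_prop]
    · exact ⟨0, by norm_num, by simpa using comp_perm_mem_majorizedSet hu π⟩
    · exact ⟨1, by norm_num, by simpa using comp_perm_mem_majorizedSet hw π⟩
  · simp only [Set.iUnion_subset_iff]
    intro s hs
    have hmix : Antitone ((1 - s) • u + s • w) := fun i j hij => by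
      simp only [Pi.add_apply, Pi.smul_apply, smul_eq_mul]
      nlinarith [hu hij, hw hij, hs.1, hs.2]
    refine (majorizedSet_subset_convexHull_perms hmix).trans
      (convexHull_min ?_ (convex_convexHull ℝ _))
    rintro _ ⟨π, rfl⟩
    have hu' : u ∘ π ∈ convexHull ℝ (perms u ∪ perms w) :=
      subset_convexHull ℝ _ (Or.inl ⟨π, rfl⟩)
    have hw' : w ∘ π ∈ convexHull ℝ (perms u ∪ perms w) :=
      subset_convexHull ℝ _ (Or.inr ⟨π, rfl⟩)
    exact convex_convexHull ℝ _ hu' hw' (sub_nonneg.2 hs.2) hs.1 (sub_add_cancel 1 s)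

end Permutohedron

lemma IsPartition3.antitone {ν : Fin 3 → ℕ} (h : IsPartition3 ν) : Antitone ν := by
  intro i j hij
  have := h.1; have := h.2
  fin_cases i <;> fin_cases j <;> simp at hij ⊢ <;> omega

lemma IsPartition3.antitone_smul_castN {l : Fin 3 → ℕ} (hl : IsPartition3 l) {c : ℝ}
    (hc : 0 ≤ c) : Antitone (c • castN l) :=
  fun _ _ hij => mul_le_mul_of_nonneg_left (Nat.cast_le.2 (hl.antitone hij)) hc

section Tableaux

variable {D : YoungDiagram} {ν : Fin 3 → ℕ}

lemma HasShape.mem_iff (h : HasShape D ν) {i j : ℕ} :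
    (i, j) ∈ D ↔ i = 0 ∧ j < ν 0 ∨ i = 1 ∧ j < ν 1 ∨ i = 2 ∧ j < ν 2 := by
  rw [YoungDiagram.mem_iff_lt_rowLen, h i]
  split_ifs with hi
  · interval_cases i <;> simp
  · omega

lemma hasShape_of_mem_iff
    (h : ∀ i j, (i, j) ∈ D ↔ i = 0 ∧ j < ν 0 ∨ i = 1 ∧ j < ν 1 ∨ i = 2 ∧ j < ν 2) :
    HasShape D ν := by
  intro i
  refine eq_of_forall_lt_iff fun j => ?_
  rw [← YoungDiagram.mem_iff_lt_rowLen, h]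
  split_ifs with hi
  · interval_cases i <;> simp
  · omega

lemma HasShape.rowLen_eq (h : HasShape D ν) (i : Fin 3) : D.rowLen i = ν i := by
  simpa using h i

lemma HasShape.mem_of_lt (h : HasShape D ν) {i j : ℕ} (hi : i < 3) (hj : j < ν 2) : (i, j) ∈ D :=
  YoungDiagram.mem_iff_lt_rowLen.2 <|
    (h.rowLen_eq 2 ▸ hj).trans_le (D.rowLen_anti i 2 (by omega))

lemma exists_hasShape (hν : Antitone ν) : ∃ D, HasShape D ν := by
  refine ⟨YoungDiagram.ofRowLens (List.ofFn ν) (List.sortedGE_ofFn_iff.2 hν),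
    hasShape_of_mem_iff fun i j => ?_⟩
  rw [YoungDiagram.mem_ofRowLens]
  simp only [List.length_ofFn, List.getElem_ofFn]
  constructor
  · rintro ⟨hi, hj⟩
    interval_cases i <;> simp_all
  · rintro (⟨rfl, hj⟩ | ⟨rfl, hj⟩ | ⟨rfl, hj⟩) <;> exact ⟨by norm_num, hj⟩

lemma HasShape.card_cells (h : HasShape D ν) : D.cells.card = ∑ i, ν i := by
  rw [Finset.card_eq_sum_card_fiberwise (f := Prod.fst) (t := Finset.range 3)]
  · simp only [Finset.sum_range_succ, Finset.sum_range_zero, Fin.sum_univ_three]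
    have hrow : ∀ i, (D.cells.filter (·.1 = i)).card = D.rowLen i :=
      fun i => D.rowLen_eq_card.symm
    simp only [hrow, zero_add]
    exact congrArg₂ (· + ·) (congrArg₂ (· + ·) (h.rowLen_eq 0) (h.rowLen_eq 1)) (h.rowLen_eq 2)
  · intro c hc
    have := h.mem_iff.1 ((YoungDiagram.mem_cells _).1 hc)
    rw [Finset.mem_coe, Finset.mem_range]
    omega

lemma SemistandardYoungTableau.le_entry (T : SemistandardYoungTableau D) {i j : ℕ}
    (h : (i, j) ∈ D) : i ≤ T i j := by
  induction i with
  | zero => exact Nat.zero_le _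
  | succ k ih =>
    exact (ih (D.up_left_mem k.le_succ le_rfl h)).trans_lt (T.col_strict k.lt_succ_self h)

lemma content_le (T : SemistandardYoungTableau D) (h : HasShape D ν) (v : ℕ) :
    content T v ≤ ν 0 := by
  rw [← h.rowLen_eq 0]
  refine (Finset.card_le_card_of_injOn Prod.snd (t := Finset.range (D.rowLen 0)) ?_ ?_).trans
    (Finset.card_range _).le
  · rintro ⟨i, j⟩ hc
    simp only [Finset.coe_filter, Set.mem_ofPred_eq, YoungDiagram.mem_cells] at hc
    exact Finset.mem_range.2 ((YoungDiagram.mem_iff_lt_rowLen.1 hc.1).trans_le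
      (D.rowLen_anti 0 i (Nat.zero_le i)))
  · -- two cells of a column carry different entries
    rintro ⟨i, j⟩ hc ⟨i', j'⟩ hc' (rfl : j = j')
    simp only [Finset.coe_filter, Set.mem_ofPred_eq, YoungDiagram.mem_cells] at hc hc'
    rcases lt_trichotomy i i' with hi | rfl | hi
    · exact absurd (T.col_strict hi hc'.1) (by omega)
    · rfl
    · exact absurd (T.col_strict hi hc.1) (by omega)

lemma entry_eq_row_of_lt (T : SemistandardYoungTableau D) (h : HasShape D ν)
    (hT : ∀ c ∈ D.cells, T c.1 c.2 < 3) {v j : ℕ} (hv : v < 3) (hj : j < ν 2) : T v j = v := by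
  have hmem : ∀ i < 3, (i, j) ∈ D := fun i hi => h.mem_of_lt hi hj
  have h₂ := T.le_entry (hmem 2 (by norm_num))
  have h₂' := hT _ ((YoungDiagram.mem_cells _).2 (hmem 2 (by norm_num)))
  have h₁ := T.le_entry (hmem 1 (by norm_num))
  have h₁₂ := T.col_strict (show 1 < 2 by norm_num) (hmem 2 (by norm_num))
  have h₀₁ := T.col_strict (show 0 < 1 by norm_num) (hmem 1 (by norm_num))
  interval_cases v <;> simp only at h₂' <;> omega

lemma le_content (T : SemistandardYoungTableau D) (h : HasShape D ν)
    (hT : ∀ c ∈ D.cells, T c.1 c.2 < 3) {v : ℕ} (hv : v < 3) : ν 2 ≤ content T v := by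
  refine (Finset.card_range _).ge.trans (Finset.card_le_card_of_injOn (fun j => (v, j)) ?_ ?_)
  · intro j hj
    rw [Finset.coe_range, Set.mem_Iio] at hj
    simp only [Finset.coe_filter, Set.mem_ofPred_eq, YoungDiagram.mem_cells]
    exact ⟨h.mem_of_lt hv hj, entry_eq_row_of_lt T h hT hv hj⟩
  · intro j _ j' _ hjj'
    simpa using hjj'

lemma sum_content (T : SemistandardYoungTableau D) (hT : ∀ c ∈ D.cells, T c.1 c.2 < 3) :
    ∑ v : Fin 3, content T v = D.cells.card := by
  rw [Finset.card_eq_sum_card_fiberwise (f := fun c => T c.1 c.2) (t := Finset.range 3)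
    fun c hc => Finset.mem_range.2 (hT c hc)]
  simp [content, Fin.sum_univ_three, Finset.sum_range_succ]

def fillingEntry (ν : Fin 3 → ℕ) (a q r i j : ℕ) : ℕ :=
  if i = 0 ∧ j < ν 0 then (if j < a then 0 else if j < a + q then 1 else 2)
  else if i = 1 ∧ j < ν 1 then (if j < r then 1 else 2)
  else if i = 2 ∧ j < ν 2 then 2 else 0

lemma exists_tableau_eq_fillingEntry (h : HasShape D ν) (hν : IsPartition3 ν) {a q r : ℕ}
    (hra : r ≤ a) (hr : ν 2 ≤ r) (hq : ν 1 ≤ a + q) :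
    ∃ T : SemistandardYoungTableau D, ∀ i j, T i j = fillingEntry ν a q r i j := by
  have := hν.1
  have := hν.2
  exact ⟨{ entry := fillingEntry ν a q r
           row_weak' := fun {i j₁ j₂} _ hmem => by
             rw [h.mem_iff] at hmem; unfold fillingEntry; split_ifs <;> omega
           col_strict' := fun {i₁ i₂ j} _ hmem => by
             rw [h.mem_iff] at hmem; unfold fillingEntry; split_ifs <;> omega
           zeros' := fun {i j} hmem => by
             rw [h.mem_iff] at hmem; unfold fillingEntry; split_ifs <;> omega }, fun _ _ => rfl⟩

lemma content_zero_of_eq_fillingEntry {a q r : ℕ} {T : SemistandardYoungTableau D}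
    (h : HasShape D ν) (hT : ∀ i j, T i j = fillingEntry ν a q r i j) (ha : a ≤ ν 0) :
    content T 0 = a := by
  have : D.cells.filter (fun c => T c.1 c.2 = 0) = (Finset.range a).image (Prod.mk 0) := by
    ext ⟨i, j⟩
    simp only [Finset.mem_filter, Finset.mem_image, Finset.mem_range, Prod.mk.injEq,
      YoungDiagram.mem_cells, h.mem_iff, hT]
    unfold fillingEntry
    constructor
    · rintro ⟨hmem, hval⟩
      exact ⟨j, by split_ifs at hval <;> omega, by split_ifs at hval <;> omega, rfl⟩
    · rintro ⟨j, hj, rfl, rfl⟩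
      exact ⟨by omega, by split_ifs <;> omega⟩
  rw [content, this, Finset.card_image_of_injective _ (Prod.mk_right_injective 0),
    Finset.card_range]

lemma content_one_of_eq_fillingEntry {a q r : ℕ} {T : SemistandardYoungTableau D}
    (h : HasShape D ν) (hT : ∀ i j, T i j = fillingEntry ν a q r i j) (hq : a + q ≤ ν 0)
    (hr : r ≤ ν 1) :
    content T 1 = q + r := by
  have : D.cells.filter (fun c => T c.1 c.2 = 1) =
      (Finset.Ico a (a + q)).image (Prod.mk 0) ∪ (Finset.range r).image (Prod.mk 1) := by
    ext ⟨i, j⟩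
    simp only [Finset.mem_filter, Finset.mem_union, Finset.mem_image, Finset.mem_range,
      Finset.mem_Ico, Prod.mk.injEq, YoungDiagram.mem_cells, h.mem_iff, hT]
    unfold fillingEntry
    constructor
    · rintro ⟨hmem, hval⟩
      split_ifs at hval <;> first
        | omega
        | exact Or.inl ⟨j, by omega, by omega, rfl⟩
        | exact Or.inr ⟨j, by omega, by omega, rfl⟩
    · rintro (⟨j, hj, rfl, rfl⟩ | ⟨j, hj, rfl, rfl⟩) <;>
        exact ⟨by omega, by split_ifs <;> first | omega | simp_all⟩
  have hdisj : Disjoint ((Finset.Ico a (a + q)).image (Prod.mk 0))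
      ((Finset.range r).image (Prod.mk 1)) := by
    rw [Finset.disjoint_left]
    rintro _ h₀ h₁
    obtain ⟨_, -, rfl⟩ := Finset.mem_image.1 h₀
    obtain ⟨_, -, h₁⟩ := Finset.mem_image.1 h₁
    simp at h₁
  rw [content, this, Finset.card_union_of_disjoint hdisj,
    Finset.card_image_of_injective _ (Prod.mk_right_injective 0),
    Finset.card_image_of_injective _ (Prod.mk_right_injective 1), Nat.card_Ico,
    Finset.card_range, Nat.add_sub_cancel_left]

lemma exists_tableau_of_mem_majorizedSet (h : HasShape D ν) (hν : IsPartition3 ν)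
    {α : Fin 3 → ℕ} (hα : α ∈ majorizedSet ν) :
    ∃ T : SemistandardYoungTableau D,
      (∀ c ∈ D.cells, T c.1 c.2 < 3) ∧ ∀ v : Fin 3, content T v = α v := by
  obtain ⟨hsum, hbound⟩ := hα
  simp only [Fin.sum_univ_three] at hsum
  have := hbound 0; have := hbound 1; have := hbound 2
  have := hν.1; have := hν.2
  -- the `α 1` ones are split as `q` in row `0` and `r` in row `1`: as many in row `0` as fit
  -- there, but leaving at least `ν 2` for row `1`
  obtain ⟨q, r, hqr, hra, hr, hq, hq', hr'⟩ : ∃ q r, q + r = α 1 ∧ r ≤ α 0 ∧ ν 2 ≤ r ∧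
      ν 1 ≤ α 0 + q ∧ α 0 + q ≤ ν 0 ∧ r ≤ ν 1 := by
    rcases le_total (α 1 - ν 2) (ν 0 - α 0) with hle | hle
    · exact ⟨α 1 - ν 2, ν 2, by omega⟩
    · exact ⟨ν 0 - α 0, α 1 - (ν 0 - α 0), by omega⟩
  obtain ⟨T, hT⟩ := exists_tableau_eq_fillingEntry h hν hra hr hq
  have hT₃ : ∀ c ∈ D.cells, T c.1 c.2 < 3 := fun c _ => by
    rw [hT]; unfold fillingEntry; split_ifs <;> omega
  have hc₀ := content_zero_of_eq_fillingEntry h hT (by omega)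
  have hc₁ := content_one_of_eq_fillingEntry h hT hq' hr'
  have hc₂ : content T 2 = α 2 := by
    have := sum_content T hT₃
    rw [h.card_cells, Fin.sum_univ_three, Fin.sum_univ_three] at this
    simp only [Fin.val_zero, Fin.val_one, Fin.val_two, hc₀, hc₁] at this
    omega
  exact ⟨T, hT₃, fun v => by fin_cases v <;> simp [hc₀, hc₁, hc₂, hqr]⟩

theorem ssytContents_eq_majorizedSet (h : HasShape D ν) (hν : IsPartition3 ν) :
    ssytContents D = majorizedSet ν := by
  ext α
  refine ⟨?_, exists_tableau_of_mem_majorizedSet h hν⟩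
  rintro ⟨T, hT, hα⟩
  refine ⟨?_, fun v => ⟨hα v ▸ le_content T h hT v.isLt, hα v ▸ content_le T h v⟩⟩
  simp only [← hα]
  rw [sum_content T hT, h.card_cells]

end Tableaux

section Support

variable {l m : Fin 3 → ℕ} {t : ℕ}

def mixedShape (l m : Fin 3 → ℕ) (t i : ℕ) : Fin 3 → ℕ := fun j => (t - i) * l j + i * m j

lemma IsPartition3.mixedShape (hl : IsPartition3 l) (hm : IsPartition3 m) (i : ℕ) :
    IsPartition3 (mixedShape l m t i) :=
  ⟨add_le_add (Nat.mul_le_mul_left _ hl.1) (Nat.mul_le_mul_left _ hm.1),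
    add_le_add (Nat.mul_le_mul_left _ hl.2) (Nat.mul_le_mul_left _ hm.2)⟩

lemma castN_mixedShape {i : ℕ} (hi : i ≤ t) :
    castN (mixedShape l m t i) = ((t : ℝ) - i) • castN l + (i : ℝ) • castN m := by
  ext j
  simp [castN, mixedShape, Nat.cast_sub hi]

theorem mem_suppTS_iff (hl : IsPartition3 l) (hm : IsPartition3 m) {α : Fin 3 → ℕ} :
    α ∈ suppTS l m t ↔ ∃ i ≤ t, α ∈ majorizedSet (mixedShape l m t i) := by
  constructor
  · rintro ⟨i, hi, D, hD, hα⟩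
    exact ⟨i, hi, ssytContents_eq_majorizedSet hD (hl.mixedShape hm i) ▸ hα⟩
  · rintro ⟨i, hi, hα⟩
    obtain ⟨D, hD⟩ := exists_hasShape (hl.mixedShape hm (t := t) i).antitone
    exact ⟨i, hi, D, hD, (ssytContents_eq_majorizedSet hD (hl.mixedShape hm i)).symm ▸ hα⟩

lemma perms_union_subset_castN_image_suppTS (hl : IsPartition3 l) (hm : IsPartition3 m) :
    perms ((t : ℝ) • castN l) ∪ perms ((t : ℝ) • castN m) ⊆ castN '' suppTS l m t := by
  have key : ∀ i ≤ t, ∀ π : Equiv.Perm (Fin 3),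
      castN (mixedShape l m t i) ∘ π ∈ castN '' suppTS l m t :=
    fun i hi π => ⟨_, (mem_suppTS_iff hl hm).2
      ⟨i, hi, comp_perm_mem_majorizedSet (hl.mixedShape hm i).antitone π⟩, rfl⟩
  rintro _ (⟨π, rfl⟩ | ⟨π, rfl⟩)
  · simpa [castN_mixedShape] using key 0 (Nat.zero_le t) π
  · simpa [castN_mixedShape] using key t le_rfl π

lemma castN_image_suppTS_subset (hl : IsPartition3 l) (hm : IsPartition3 m) (ht : 0 < t) :
    castN '' suppTS l m t ⊆
      ⋃ s ∈ Set.Icc (0 : ℝ) 1,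
        majorizedSet ((1 - s) • ((t : ℝ) • castN l) + s • ((t : ℝ) • castN m)) := by
  rintro _ ⟨α, hα, rfl⟩
  obtain ⟨i, hi, hα⟩ := (mem_suppTS_iff hl hm).1 hα
  have ht' : (0 : ℝ) < t := Nat.cast_pos.2 ht
  have hit : (i : ℝ) ≤ t := Nat.cast_le.2 hi
  simp only [Set.mem_iUnion, exists_prop]
  refine ⟨i / t, ⟨by positivity, (div_le_one ht').2 hit⟩, ?_⟩
  rw [← castN_mem_majorizedSet_iff, castN_mixedShape hi] at hα
  convert hα using 2
  rw [smul_smul, smul_smul, div_mul_cancel₀ _ ht'.ne', sub_mul, one_mul, div_mul_cancel₀ _ ht'.ne']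

lemma floor_mul_le_of_le_one {s : ℝ} (hs : s ≤ 1) : ⌊s * t⌋₊ ≤ t :=
  Nat.floor_le_of_le (mul_le_of_le_one_left t.cast_nonneg hs)

lemma mem_majorizedSet_mixedShape_floor (hsum : ∑ j, l j = ∑ j, m j) (h0 : m 0 ≤ l 0)
    (h2 : l 2 = m 2 + 1) {s : ℝ} (hs : s ∈ Set.Icc (0 : ℝ) 1) {y : Fin 3 → ℤ}
    (hy : (fun j => (y j : ℝ)) ∈
      majorizedSet ((1 - s) • ((t : ℝ) • castN l) + s • ((t : ℝ) • castN m))) :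
    (fun j => (y j : ℝ)) ∈ majorizedSet (castN (mixedShape l m t ⌊s * t⌋₊)) := by
  obtain ⟨hysum, hy⟩ := hy
  set i := ⌊s * t⌋₊
  have hir : (i : ℝ) ≤ s * t := Nat.floor_le (mul_nonneg hs.1 t.cast_nonneg)
  have h2' : (l 2 : ℝ) = m 2 + 1 := by exact_mod_cast h2
  have h0' : (m 0 : ℝ) ≤ l 0 := by exact_mod_cast h0
  have hsum' : ∑ j, (l j : ℝ) = ∑ j, (m j : ℝ) := by exact_mod_cast hsum
  rw [castN_mixedShape (floor_mul_le_of_le_one hs.2)]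
  simp only [majorizedSet, castN, Pi.add_apply, Pi.smul_apply, smul_eq_mul,
    Set.mem_ofPred_eq] at hy hysum ⊢
  refine ⟨?_, fun j => ⟨?_, by nlinarith [(hy j).2]⟩⟩
  · simp only [Fin.sum_univ_three] at hysum hsum' ⊢
    linear_combination hysum + (i - s * t) * hsum'
  · have hlt : ((t * l 2 : ℤ) : ℝ) < y j + i + 1 := by
      push_cast
      nlinarith [(hy j).1, Nat.lt_floor_add_one (s * t)]
    have hle : ((t * l 2 : ℤ) : ℝ) ≤ y j + i := by
      exact_mod_cast Int.lt_add_one_iff.1 (by exact_mod_cast hlt)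
    push_cast at hle
    linarith [show ((t : ℝ) - i) * l 2 + i * m 2 = t * l 2 - i by rw [h2']; ring]

lemma exists_eq_cast_of_mem_majorizedSet_castN {ν : Fin 3 → ℕ} {y : Fin 3 → ℤ}
    (hy : (fun j => (y j : ℝ)) ∈ majorizedSet (castN ν)) :
    ∃ α ∈ majorizedSet ν, y = fun j => (α j : ℤ) := by
  have hy₀ : ∀ j, 0 ≤ y j := fun j => by
    have : (0 : ℝ) ≤ y j := (Nat.cast_nonneg _).trans (hy.2 j).1
    exact_mod_cast this
  have hcast : castN (fun j => (y j).toNat) = fun j => (y j : ℝ) := by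
    ext j
    rw [castN, ← Int.cast_natCast, Int.toNat_of_nonneg (hy₀ j)]
  refine ⟨fun j => (y j).toNat, ?_, funext fun j => (Int.toNat_of_nonneg (hy₀ j)).symm⟩
  rwa [← castN_mem_majorizedSet_iff, hcast]

end Support

theorem stmt_14_general (l m : Fin 3 → ℕ) (n : ℕ)
    (hl : IsPartition3 l) (hm : IsPartition3 m)
    (hln : l 0 + l 1 + l 2 = n) (hmn : m 0 + m 1 + m 2 = n)
    (h1 : m 0 < l 0) (h3 : l 2 = m 2 + 1) :
    ∀ t : ℕ, 0 < t →
      (convexHull ℝ (castN '' suppTS l m t) =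
          (t : ℝ) • convexHull ℝ (perms (castN l) ∪ perms (castN m))) ∧
        ∀ y : Fin 3 → ℤ,
          (fun i => (y i : ℝ)) ∈ convexHull ℝ (castN '' suppTS l m t) ↔
            ∃ α ∈ suppTS l m t, y = fun i => (α i : ℤ) := by
  intro t ht
  have hsum : ∑ j, l j = ∑ j, m j := by simp only [Fin.sum_univ_three]; omega
  have hP : (t : ℝ) • convexHull ℝ (perms (castN l) ∪ perms (castN m)) =
      ⋃ s ∈ Set.Icc (0 : ℝ) 1,
        majorizedSet ((1 - s) • ((t : ℝ) • castN l) + s • ((t : ℝ) • castN m)) := by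
    rw [← convexHull_smul, Set.smul_set_union, smul_perms, smul_perms,
      convexHull_perms_union (hl.antitone_smul_castN t.cast_nonneg)
        (hm.antitone_smul_castN t.cast_nonneg)]
  have hhull : convexHull ℝ (castN '' suppTS l m t) =
      (t : ℝ) • convexHull ℝ (perms (castN l) ∪ perms (castN m)) := by
    refine subset_antisymm ?_ ?_
    · exact hP ▸ convexHull_min (castN_image_suppTS_subset hl hm ht)
        (convex_biUnion_majorizedSet _ _)
    · rw [← convexHull_smul, Set.smul_set_union, smul_perms, smul_perms]
      exact convexHull_mono (perms_union_subset_castN_image_suppTS hl hm)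
  refine ⟨hhull, fun y => ⟨fun hy => ?_, ?_⟩⟩
  · rw [hhull, hP] at hy
    simp only [Set.mem_iUnion, exists_prop] at hy
    obtain ⟨s, hs, hy⟩ := hy
    obtain ⟨α, hα, rfl⟩ := exists_eq_cast_of_mem_majorizedSet_castN
      (mem_majorizedSet_mixedShape_floor hsum h1.le h3 hs hy)
    exact ⟨α, (mem_suppTS_iff hl hm).2 ⟨_, floor_mul_le_of_le_one hs.2, hα⟩, rfl⟩
  · rintro ⟨α, hα, rfl⟩
    exact subset_convexHull ℝ _ ⟨α, hα, funext fun j => by simp [castN]⟩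

/-- Let `λ, μ` be incomparable partitions of length 3 of the same size `n` with `λ₁ > μ₁`,
`λ₃ = μ₃ + 1`, whose convex hull `P` of permutations has `{λ, μ}` as its set of
dominance-maximal partition lattice points.  Then for every `t > 0` the polynomial
`ts = Σ_{i=0}^t s_{(t-i)λ + iμ}` has saturated Newton polytope and `Newt(ts) = tP`. -/
theorem stmt_14 (l m : Fin 3 → ℕ) (n : ℕ)
    (hl : IsPartition3 l) (hm : IsPartition3 m)
    (hln : l 0 + l 1 + l 2 = n) (hmn : m 0 + m 1 + m 2 = n)
    (hinc : ¬Dom l m ∧ ¬Dom m l)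
    (h1 : m 0 < l 0) (h3 : l 2 = m 2 + 1)
    (hmax : ∀ p : Fin 3 → ℕ,
      IsMaxPLP (convexHull ℝ (perms (castN l) ∪ perms (castN m))) p ↔ (p = l ∨ p = m)) :
    ∀ t : ℕ, 0 < t →
      (convexHull ℝ (castN '' suppTS l m t) =
          (t : ℝ) • convexHull ℝ (perms (castN l) ∪ perms (castN m))) ∧
        ∀ y : Fin 3 → ℤ,
          (fun i => (y i : ℝ)) ∈ convexHull ℝ (castN '' suppTS l m t) ↔
            ∃ α ∈ suppTS l m t, y = fun i => (α i : ℤ) :=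
  stmt_14_general l m n hl hm hln hmn h1 h3
end

section
/- Let λ, μ ∈ ℝⁿ be weakly decreasing vectors of the same sum. Then the permutohedron of μ (convex hull of all coordinate permutations of μ) is contained in the permutohedron of λ if and only if μ is dominated by λ, i.e., μ₁+⋯+μ_k ≤ λ₁+⋯+λ_k for all k (Rado's theorem). -/
/-!
The partial-sum functional `w ↦ w₁ + ⋯ + w_k` is maximized over the permutations of a
decreasing `λ` at `λ` itself (rearrangement inequality), hence over its whole permutohedron;
evaluating at `μ` gives dominance. Conversely, if `μ` lay outside the permutohedron of `λ`, some
linear functional `c` would separate them. Sorting `c` increasingly to `d = c ∘ σ`, Abel summation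
turns dominance into `d ⬝ᵥ λ ≤ d ⬝ᵥ μ`, and the rearrangement inequality gives `d ⬝ᵥ μ ≤ c ⬝ᵥ μ`, so
`c` does not separate `μ` from the vertex `λ ∘ σ⁻¹`. Finally the permutohedron of `λ` is convex and
invariant under permutations, so it contains that of `μ` as soon as it contains `μ`.
-/

/-- The permutohedron of `v : Fin n → ℝ`: the convex hull of all coordinate permutations. -/
def permutohedron {n : ℕ} (v : Fin n → ℝ) : Set (Fin n → ℝ) :=
  convexHull ℝ {w | ∃ π : Equiv.Perm (Fin n), w = v ∘ π}

open Finset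

section PartialSum

variable {n : ℕ} {M : Type*} [AddCommMonoid M]

def partialSum (v : Fin n → M) (k : ℕ) : M :=
  ∑ i ∈ univ.filter (fun i : Fin n => (i : ℕ) < k), v i

@[simp]
lemma partialSum_zero (v : Fin n → M) : partialSum v 0 = 0 := by
  simp [partialSum]

lemma partialSum_of_le {k : ℕ} (v : Fin n → M) (hk : n ≤ k) : partialSum v k = ∑ i, v i := by
  rw [partialSum, filter_true_of_mem fun i _ => i.is_lt.trans_le hk]

lemma partialSum_succ (v : Fin n → M) (i : Fin n) :
    partialSum v (i + 1) = partialSum v i + v i := by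
  rw [partialSum, partialSum, sum_filter, sum_filter, ← Fintype.sum_ite_eq' i v, ← sum_add_distrib]
  exact sum_congr rfl fun j _ => by split_ifs <;> grind

end PartialSum

lemma sum_mul_nonpos_of_monotone {R : Type*} [CommRing R] [PartialOrder R] [IsOrderedRing R]
    {n : ℕ} {d x : Fin n → R} (hd : Monotone d) (hx : ∀ k, 0 ≤ partialSum x k)
    (hx₀ : ∑ i, x i = 0) : ∑ i, d i * x i ≤ 0 := by
  obtain _ | m := n
  · simp
  have hx_eq : ∀ i : Fin (m + 1), x i = partialSum x (i + 1) - partialSum x i := fun i => by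
    rw [partialSum_succ]; ring
  have hlast : partialSum x (m + 1) = 0 := (partialSum_of_le x le_rfl).trans hx₀
  calc ∑ i, d i * x i
      = ∑ i, d i * partialSum x (i + 1) - ∑ i, d i * partialSum x i := by
        simp only [hx_eq, mul_sub, sum_sub_distrib]
    _ = -∑ i : Fin m, (d i.succ - d i.castSucc) * partialSum x (i + 1) := by
        rw [Fin.sum_univ_castSucc, Fin.sum_univ_succ]
        simp only [Fin.val_castSucc, Fin.val_last, Fin.val_zero, Fin.val_succ, hlast,
          partialSum_zero, mul_zero, add_zero, zero_add, sub_mul, sum_sub_distrib]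
        ring
    _ ≤ 0 := neg_nonpos.2 <| sum_nonneg fun i _ =>
        mul_nonneg (sub_nonneg.2 (hd i.castSucc_le_succ)) (hx _)

section Permutohedron

variable {n : ℕ}

lemma comp_perm_mem_permutohedron_self (v : Fin n → ℝ) (π : Equiv.Perm (Fin n)) :
    v ∘ π ∈ permutohedron v :=
  subset_convexHull ℝ _ ⟨π, rfl⟩

lemma self_mem_permutohedron (v : Fin n → ℝ) : v ∈ permutohedron v :=
  comp_perm_mem_permutohedron_self v 1

lemma isClosed_permutohedron (v : Fin n → ℝ) : IsClosed (permutohedron v) :=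
  ((Set.finite_range fun π : Equiv.Perm (Fin n) => v ∘ π).subset
    (by rintro _ ⟨π, rfl⟩; exact ⟨π, rfl⟩)).isClosed_convexHull (𝕜 := ℝ)

lemma comp_perm_mem_permutohedron {v w : Fin n → ℝ} (hw : w ∈ permutohedron v)
    (π : Equiv.Perm (Fin n)) : w ∘ π ∈ permutohedron v := by
  have hmem : w ∘ π ∈ LinearMap.funLeft ℝ ℝ π '' permutohedron v := ⟨w, hw, rfl⟩
  rw [permutohedron, LinearMap.image_convexHull] at hmem
  refine convexHull_mono ?_ hmem
  rintro _ ⟨_, ⟨ρ, rfl⟩, rfl⟩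
  exact ⟨π.trans ρ, rfl⟩

lemma permutohedron_subset_of_mem {v w : Fin n → ℝ} (hw : w ∈ permutohedron v) :
    permutohedron w ⊆ permutohedron v :=
  convexHull_min (by rintro _ ⟨π, rfl⟩; exact comp_perm_mem_permutohedron hw π)
    (convex_convexHull ℝ _)

lemma partialSum_comp_perm_le {v : Fin n → ℝ} (hv : Antitone v) (σ : Equiv.Perm (Fin n))
    (k : ℕ) : partialSum (v ∘ σ) k ≤ partialSum v k := by
  have hind : Antitone fun i : Fin n => if (i : ℕ) < k then (1 : ℝ) else 0 := fun i j hij => by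
    dsimp only
    split_ifs <;> grind [Fin.le_def]
  simpa [partialSum, sum_filter] using (hind.monovary hv).sum_smul_comp_perm_le_sum_smul (σ := σ)

lemma partialSum_le_of_mem_permutohedron {v w : Fin n → ℝ} (hv : Antitone v)
    (hw : w ∈ permutohedron v) (k : ℕ) : partialSum w k ≤ partialSum v k := by
  have hlin : IsLinearMap ℝ fun u : Fin n → ℝ => partialSum u k :=
    ⟨fun a b => by simp [partialSum, sum_add_distrib], fun r a => by simp [partialSum, mul_sum]⟩
  refine convexHull_min ?_ (convex_halfSpace_le hlin _) hw
  rintro _ ⟨σ, rfl⟩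
  exact partialSum_comp_perm_le hv σ k

lemma exists_perm_sum_mul_le {l m : Fin n → ℝ} (hm : Antitone m)
    (hdom : ∀ k, partialSum m k ≤ partialSum l k) (hsum : ∑ i, l i = ∑ i, m i)
    (c : Fin n → ℝ) : ∃ σ : Equiv.Perm (Fin n), ∑ i, c i * l (σ i) ≤ ∑ i, c i * m i := by
  set σ := Tuple.sort c
  have hd : Monotone (c ∘ σ) := Tuple.monotone_sort c
  have habel : ∑ i, c (σ i) * l i ≤ ∑ i, c (σ i) * m i := by
    have := sum_mul_nonpos_of_monotone hd (x := l - m)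
      (fun k => by simpa [partialSum, sum_sub_distrib] using hdom k)
      (by simp [sum_sub_distrib, hsum])
    simpa [mul_sub, sum_sub_distrib] using this
  refine ⟨σ⁻¹, ?_⟩
  calc ∑ i, c i * l (σ⁻¹ i) = ∑ i, c (σ i) * l i := (Equiv.sum_comp σ _).symm.trans (by simp)
    _ ≤ ∑ i, c (σ i) * m i := habel
    _ ≤ ∑ i, c i * m i := by
      simpa using (hd.antivary hm).sum_smul_le_sum_comp_perm_smul (σ := σ⁻¹)

lemma mem_permutohedron_of_partialSum_le {l m : Fin n → ℝ} (hm : Antitone m)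
    (hdom : ∀ k, partialSum m k ≤ partialSum l k) (hsum : ∑ i, l i = ∑ i, m i) :
    m ∈ permutohedron l := by
  by_contra hm_notMem
  obtain ⟨f, u, hfm, hfl⟩ := geometric_hahn_banach_point_closed (convex_convexHull ℝ _)
    (isClosed_permutohedron l) hm_notMem
  have hf : ∀ w, f w = ∑ i, (f fun j => if i = j then 1 else 0) * w i := fun w => by
    simpa [mul_comm] using f.toLinearMap.pi_apply_eq_sum_univ w
  obtain ⟨σ, hσ⟩ := exists_perm_sum_mul_le hm hdom hsum fun i => f fun j => if i = j then 1 else 0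
  have hfσ := hfl _ (comp_perm_mem_permutohedron_self l σ)
  rw [hf] at hfσ hfm
  exact (hσ.trans_lt (hfm.trans hfσ)).false

end Permutohedron

/-- Rado's theorem: for weakly decreasing vectors `λ, μ ∈ ℝⁿ` of equal sum, the permutohedron
of `μ` is contained in that of `λ` iff `μ` is dominated by `λ`, i.e., every initial partial
sum of `μ` is at most the corresponding partial sum of `λ`. -/
theorem stmt_17 {n : ℕ} (l m : Fin n → ℝ)
    (hl : ∀ i j : Fin n, i ≤ j → l j ≤ l i) (hm : ∀ i j : Fin n, i ≤ j → m j ≤ m i)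
    (hsum : ∑ i, l i = ∑ i, m i) :
    permutohedron m ⊆ permutohedron l ↔
      ∀ k : ℕ, ∑ i ∈ Finset.univ.filter (fun i : Fin n => (i : ℕ) < k), m i ≤
        ∑ i ∈ Finset.univ.filter (fun i : Fin n => (i : ℕ) < k), l i := by
  constructor
  · intro hsub
    exact partialSum_le_of_mem_permutohedron hl (hsub (self_mem_permutohedron m))
  · intro hdom
    exact permutohedron_subset_of_mem (mem_permutohedron_of_partialSum_le hm hdom hsum)
end
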